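/- There exists a non-constant entire function f and a linear differential polynomial F = f'' + a₁ f' + a₀ f with polynomial coefficients such that f omits the value 1 and F omits the value 3; concretely, f(z) = 1 + e^{−z²} with F = f'' + 2z f' + 3f = 3 + e^{−z²} satisfies f(z) ≠ 1 and F(z) ≠ 3 for all z ∈ ℂ. -/

import Mathlib

open Complex

lemma hasDerivAt_cexp_neg_sq (z : ℂ) :
    HasDerivAt (fun z : ℂ => cexp (-z ^ 2)) (-2 * z * cexp (-z ^ 2)) z := by
  have h : HasDerivAt (fun z : ℂ => -z ^ 2) (-(2 * z)) z := by
    simpa using (hasDerivAt_pow 2 z).fun_neg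
  exact h.cexp.congr_deriv (by ring)

lemma deriv_cexp_neg_sq :
    deriv (fun z : ℂ => cexp (-z ^ 2)) = fun z => -2 * z * cexp (-z ^ 2) :=
  funext fun z => (hasDerivAt_cexp_neg_sq z).deriv

lemma deriv_deriv_cexp_neg_sq :
    deriv (deriv fun z : ℂ => cexp (-z ^ 2)) = fun z => (4 * z ^ 2 - 2) * cexp (-z ^ 2) := by
  rw [deriv_cexp_neg_sq]
  funext z
  have h := ((hasDerivAt_id' z).const_mul (-2)).fun_mul (hasDerivAt_cexp_neg_sq z)
  rw [h.deriv]
  ring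

/-- For `f = 1 + w` this gives `f'' + 2z f' + 3f = 3 + w`. -/
lemma cexp_neg_sq_ode (z : ℂ) :
    deriv (deriv fun z : ℂ => cexp (-z ^ 2)) z + 2 * z * deriv (fun z : ℂ => cexp (-z ^ 2)) z
      + 2 * cexp (-z ^ 2) = 0 := by
  rw [deriv_deriv_cexp_neg_sq, deriv_cexp_neg_sq]
  ring

lemma cexp_neg_one_ne_one : cexp (-1) ≠ 1 := by
  rw [← ofReal_one, ← ofReal_neg, ← ofReal_exp, ne_eq, ofReal_inj, Real.exp_eq_one_iff]
  norm_num

/-- Counterexample to extending Hayman's alternative to linear differential polynomials: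
`f(z) = 1 + e^{−z²}` omits `1`, `F = f'' + 2z·f' + 3f = 3 + e^{−z²}` omits `3`,
yet `f` is non-constant. -/
theorem hayman_alternative_counterexample
    (f F : ℂ → ℂ) (hf : f = fun z => 1 + Complex.exp (-z ^ 2))
    (hF : F = fun z => deriv (deriv f) z + 2 * z * deriv f z + 3 * f z) :
    (∀ z : ℂ, F z = 3 + Complex.exp (-z ^ 2)) ∧
    (∀ z : ℂ, f z ≠ 1) ∧ (∀ z : ℂ, F z ≠ 3) ∧ ¬ ∃ c : ℂ, ∀ z : ℂ, f z = c := by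
  have hderiv : deriv f = deriv fun z : ℂ => cexp (-z ^ 2) := by
    rw [hf, deriv_const_add']
  have hFval : ∀ z : ℂ, F z = 3 + cexp (-z ^ 2) := fun z => by
    rw [hF, hderiv, hf]
    linear_combination cexp_neg_sq_ode z
  refine ⟨hFval, fun z => ?_, fun z => ?_, ?_⟩
  · simp [hf, exp_ne_zero]
  · simp [hFval, exp_ne_zero]
  · rintro ⟨c, hc⟩
    have h := (hc 1).trans (hc 0).symm
    simp only [hf, one_pow, ne_eq, OfNat.ofNat_ne_zero, not_false_eq_true, zero_pow, neg_zero,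
      exp_zero, add_right_inj] at h
    exact cexp_neg_one_ne_one h
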